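/- arXiv:2210.04488 — 2 statements merged into one kernel-verified Lean document; each statement's English description precedes it below -/
import Mathlib

section
/- If ℓ̌ > 1, then min over ϑ ∈ ℝ of Ľ_O(ℓ̌, ϑ) equals 1, and this minimum is attained at ϑ = ℓ̌. If 0 < ℓ̌ ≤ 1, then min over ϑ ∈ ℝ of Ľ_O(ℓ̌, ϑ) equals ℓ̌, and this minimum is attained at ϑ = 0. -/
/-- The 2×2 pivot matrix M(ℓ,ϑ,c,s) = A − B with A = diag(ℓ,0), B = ϑ·[[c²,cs],[cs,s²]]. -/
noncomputable def pivotM (l θ c s : ℝ) : Matrix (Fin 2) (Fin 2) ℝ :=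
  !![l - θ * c ^ 2, -(θ * c * s); -(θ * c * s), -(θ * s ^ 2)]

/-- Frobenius norm: square root of the sum of squares of the entries. -/
noncomputable def frobNorm (A : Matrix (Fin 2) (Fin 2) ℝ) : ℝ :=
  Real.sqrt (∑ i, ∑ j, (A i j) ^ 2)

/-- Operator norm: the ℓ²→ℓ² operator norm, i.e. the largest singular value. -/
noncomputable def opNorm (A : Matrix (Fin 2) (Fin 2) ℝ) : ℝ :=
  ‖LinearMap.toContinuousLinearMap (Matrix.toEuclideanLin A)‖

/-- Nuclear norm: the trace of √(AᴴA), i.e. the sum of the singular values. -/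
noncomputable def nucNorm (A : Matrix (Fin 2) (Fin 2) ℝ) : ℝ :=
  (((Matrix.posSemidef_conjTranspose_mul_self A).1.eigenvectorUnitary : Matrix (Fin 2) (Fin 2) ℝ) *
    Matrix.diagonal (Real.sqrt ∘ (Matrix.posSemidef_conjTranspose_mul_self A).1.eigenvalues) *
    (star (Matrix.posSemidef_conjTranspose_mul_self A).1.eigenvectorUnitary :
      Matrix (Fin 2) (Fin 2) ℝ)).trace

/-- Limiting cosine č(ℓ̌) in the γ → 0 disproportional framework. -/
noncomputable def cCheck (l : ℝ) : ℝ := if 1 < l then Real.sqrt (1 - 1 / l ^ 2) else 0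

/-- Limiting sine š(ℓ̌) = √(1 − č(ℓ̌)²). -/
noncomputable def sCheck (l : ℝ) : ℝ := Real.sqrt (1 - cCheck l ^ 2)

/-- Eigenvalue mapping λ̌(ℓ̌) in the γ → 0 disproportional framework. -/
noncomputable def lamCheck (l : ℝ) : ℝ := if 1 < l then l + 1 / l else 2

/-- Asymptotic Frobenius loss Ľ_F(ℓ̌, ϑ). -/
noncomputable def lossCheckF (l θ : ℝ) : ℝ := frobNorm (pivotM l θ (cCheck l) (sCheck l))

/-- Asymptotic operator-norm loss Ľ_O(ℓ̌, ϑ). -/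
noncomputable def lossCheckO (l θ : ℝ) : ℝ := opNorm (pivotM l θ (cCheck l) (sCheck l))

/-- Asymptotic nuclear-norm loss Ľ_N(ℓ̌, ϑ). -/
noncomputable def lossCheckN (l θ : ℝ) : ℝ := nucNorm (pivotM l θ (cCheck l) (sCheck l))

noncomputable def vec2 (a b : ℝ) : EuclideanSpace ℝ (Fin 2) :=
  (WithLp.equiv 2 (Fin 2 → ℝ)).symm ![a, b]

lemma vec2_norm (a b : ℝ) : ‖vec2 a b‖ = Real.sqrt (a ^ 2 + b ^ 2) := by
  rw [EuclideanSpace.norm_eq]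
  norm_num [Fin.sum_univ_two, vec2, Real.norm_eq_abs, sq_abs]

lemma vec2_eta (x : EuclideanSpace ℝ (Fin 2)) : x = vec2 (x 0) (x 1) := by
  ext i; fin_cases i <;> rfl

lemma toE_apply (A : Matrix (Fin 2) (Fin 2) ℝ) (a b : ℝ) :
    (Matrix.toEuclideanLin A) (vec2 a b)
      = vec2 (A 0 0 * a + A 0 1 * b) (A 1 0 * a + A 1 1 * b) := by
  ext i
  show A.mulVec ![a, b] i = _
  fin_cases i <;> simp [Matrix.mulVec, dotProduct, Fin.sum_univ_two, vec2]

lemma opNorm_ge (A : Matrix (Fin 2) (Fin 2) ℝ) (x : EuclideanSpace ℝ (Fin 2)) :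
    ‖(Matrix.toEuclideanLin A) x‖ ≤ opNorm A * ‖x‖ :=
  (LinearMap.toContinuousLinearMap (Matrix.toEuclideanLin A)).le_opNorm x

lemma opNorm_le (A : Matrix (Fin 2) (Fin 2) ℝ) (C : ℝ) (hC : 0 ≤ C)
    (h : ∀ x : EuclideanSpace ℝ (Fin 2), ‖(Matrix.toEuclideanLin A) x‖ ≤ C * ‖x‖) :
    opNorm A ≤ C :=
  ContinuousLinearMap.opNorm_le_bound _ hC h


theorem optimal_operator_shrinker_check (l : ℝ) (hl : 0 < l) :
    (1 < l → IsLeast (Set.range (lossCheckO l)) 1 ∧ lossCheckO l l = 1) ∧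
    (l ≤ 1 → IsLeast (Set.range (lossCheckO l)) l ∧ lossCheckO l 0 = l) := by
  have hl0 : l ≠ 0 := ne_of_gt hl
  constructor
  · -- case 1 < l
    intro h1
    set c := cCheck l with hcdef
    have hc2 : c ^ 2 = 1 - 1 / l ^ 2 := by
      rw [hcdef, cCheck, if_pos h1, Real.sq_sqrt]
      have : 1 / l ^ 2 ≤ 1 := by
        rw [div_le_one (by positivity)]
        nlinarith
      linarith
    have hs : sCheck l = 1 / l := by
      rw [sCheck, ← hcdef, hc2]
      have : (1:ℝ) - (1 - 1 / l ^ 2) = (1/l)^2 := by ring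
      rw [this, Real.sqrt_sq (by positivity)]
    -- lower bound: for every θ, 1 ≤ lossCheckO l θ
    have hlow : ∀ θ, 1 ≤ lossCheckO l θ := by
      intro θ
      have key := opNorm_ge (pivotM l θ c (sCheck l)) (vec2 (1/l) (-c))
      rw [toE_apply, vec2_norm, vec2_norm] at key
      have e00 : pivotM l θ c (sCheck l) 0 0 = l - θ * c ^ 2 := by
        simp [pivotM]
      have e01 : pivotM l θ c (sCheck l) 0 1 = -(θ * c * (1/l)) := by
        simp [pivotM, hs]
      have e10 : pivotM l θ c (sCheck l) 1 0 = -(θ * c * (1/l)) := by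
        simp [pivotM, hs]
      have e11 : pivotM l θ c (sCheck l) 1 1 = -(θ * (1/l) ^ 2) := by
        simp [pivotM, hs]
      rw [e00, e01, e10, e11] at key
      have h1v : (l - θ * c ^ 2) * (1/l) + -(θ * c * (1/l)) * (-c) = 1 := by
        field_simp
        ring
      have h2v : -(θ * c * (1/l)) * (1/l) + -(θ * (1/l) ^ 2) * (-c) = 0 := by
        ring
      rw [h1v, h2v] at key
      have hn : (1/l) ^ 2 + (-c) ^ 2 = 1 := by
        rw [neg_pow]; rw [hc2]; field_simp; ring
      rw [hn] at key
      norm_num [Real.sqrt_one] at key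
      exact key
    -- value at θ = l
    have hval : lossCheckO l l = 1 := by
      refine le_antisymm ?_ (hlow l)
      apply opNorm_le _ _ zero_le_one
      intro x
      rw [vec2_eta x, toE_apply, vec2_norm, vec2_norm]
      have e00 : pivotM l l c (sCheck l) 0 0 = 1/l := by
        simp only [pivotM, Matrix.cons_val', Matrix.cons_val_zero, Matrix.empty_val',
          Matrix.cons_val_fin_one, Matrix.cons_val_one, Matrix.head_cons, Matrix.head_fin_const, Matrix.of_apply]
        rw [hc2]; field_simp; ring
      have e01 : pivotM l l c (sCheck l) 0 1 = -c := by
        simp only [pivotM, Matrix.cons_val', Matrix.cons_val_zero, Matrix.empty_val',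
          Matrix.cons_val_fin_one, Matrix.cons_val_one, Matrix.head_cons, Matrix.head_fin_const, Matrix.of_apply]
        rw [hs]; field_simp
      have e10 : pivotM l l c (sCheck l) 1 0 = -c := by
        simp only [pivotM, Matrix.cons_val', Matrix.cons_val_zero, Matrix.empty_val',
          Matrix.cons_val_fin_one, Matrix.cons_val_one, Matrix.head_cons, Matrix.head_fin_const, Matrix.of_apply]
        rw [hs]; field_simp
      have e11 : pivotM l l c (sCheck l) 1 1 = -(1/l) := by
        simp only [pivotM, Matrix.cons_val', Matrix.cons_val_zero, Matrix.empty_val',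
          Matrix.cons_val_fin_one, Matrix.cons_val_one, Matrix.head_cons, Matrix.head_fin_const, Matrix.of_apply]
        rw [hs]; field_simp
      rw [e00, e01, e10, e11, one_mul]
      apply Real.sqrt_le_sqrt
      have : (1/l * x 0 + -c * x 1) ^ 2 + (-c * x 0 + -(1/l) * x 1) ^ 2
          = x 0 ^ 2 + x 1 ^ 2 := by
        linear_combination (x 0 ^ 2 + x 1 ^ 2) * hc2
      rw [this]
    exact ⟨⟨⟨l, hval⟩, by rintro y ⟨θ, rfl⟩; exact hlow θ⟩, hval⟩
  · -- case l ≤ 1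
    intro h1
    have hc0 : cCheck l = 0 := by rw [cCheck, if_neg (not_lt.2 h1)]
    have hs1 : sCheck l = 1 := by rw [sCheck, hc0]; norm_num
    have hlow : ∀ θ, l ≤ lossCheckO l θ := by
      intro θ
      have key := opNorm_ge (pivotM l θ (cCheck l) (sCheck l)) (vec2 1 0)
      rw [toE_apply, vec2_norm, vec2_norm] at key
      have e00 : pivotM l θ (cCheck l) (sCheck l) 0 0 = l := by simp [pivotM, hc0]
      have e10 : pivotM l θ (cCheck l) (sCheck l) 1 0 = 0 := by simp [pivotM, hc0]
      rw [e00, e10] at key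
      norm_num [Real.sqrt_sq hl.le] at key
      exact key
    have hval : lossCheckO l 0 = l := by
      refine le_antisymm ?_ (hlow 0)
      apply opNorm_le _ _ hl.le
      intro x
      rw [vec2_eta x, toE_apply, vec2_norm, vec2_norm]
      have e00 : pivotM l 0 (cCheck l) (sCheck l) 0 0 = l := by simp [pivotM]
      have e01 : pivotM l 0 (cCheck l) (sCheck l) 0 1 = 0 := by simp [pivotM]
      have e10 : pivotM l 0 (cCheck l) (sCheck l) 1 0 = 0 := by simp [pivotM]
      have e11 : pivotM l 0 (cCheck l) (sCheck l) 1 1 = 0 := by simp [pivotM]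
      rw [e00, e01, e10, e11]
      have : l * Real.sqrt (x 0 ^ 2 + x 1 ^ 2)
          = Real.sqrt (l ^ 2 * (x 0 ^ 2 + x 1 ^ 2)) := by
        rw [Real.sqrt_mul (by positivity), Real.sqrt_sq hl.le]
      rw [this]
      apply Real.sqrt_le_sqrt
      nlinarith [sq_nonneg (x 0), sq_nonneg (x 1)]
    exact ⟨⟨⟨0, hval⟩, by rintro y ⟨θ, rfl⟩; exact hlow θ⟩, hval⟩
end

section
/- For every ℓ̌ > 0, the minimum over ϑ ∈ ℝ of Ľ_N(ℓ̌, ϑ) is attained at ϑ* = ℓ̌ − 2/ℓ̌ if ℓ̌ > √2 and at ϑ* = 0 if 0 < ℓ̌ ≤ √2, and the minimal value is 2√(1 − 1/ℓ̌²) if ℓ̌ > √2 and ℓ̌ if 0 < ℓ̌ ≤ √2. -/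
lemma nucNorm_eq_sqrt (A : Matrix (Fin 2) (Fin 2) ℝ) :
    nucNorm A = Real.sqrt ((A.conjTranspose * A).trace + 2 * |A.det|) := by
  have hP := Matrix.posSemidef_conjTranspose_mul_self A
  have htrace : nucNorm A = ∑ i, Real.sqrt (hP.1.eigenvalues i) := by
    unfold nucNorm
    rw [Matrix.trace_mul_comm, ← Matrix.mul_assoc, Matrix.UnitaryGroup.star_mul_self,
      Matrix.one_mul, Matrix.trace_diagonal]
    rfl
  have hT : (A.conjTranspose * A).trace = ∑ i, hP.1.eigenvalues i := by
    rw [hP.1.trace_eq_sum_eigenvalues]; simp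
  have hD : (A.conjTranspose * A).det = ∏ i, hP.1.eigenvalues i := by
    rw [hP.1.det_eq_prod_eigenvalues]; simp
  have hD2 : (A.conjTranspose * A).det = A.det ^ 2 := by
    simp [Matrix.det_mul, Matrix.det_conjTranspose, sq]
  have e0 := hP.eigenvalues_nonneg 0
  have e1 := hP.eigenvalues_nonneg 1
  rw [Fin.prod_univ_two] at hD
  rw [htrace, hT, Fin.sum_univ_two, Fin.sum_univ_two]
  have habs : |A.det| = Real.sqrt (hP.1.eigenvalues 0) * Real.sqrt (hP.1.eigenvalues 1) := by
    rw [← Real.sqrt_mul e0, ← hD, hD2, Real.sqrt_sq_eq_abs]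
  rw [habs, ← Real.sqrt_sq (add_nonneg (Real.sqrt_nonneg _) (Real.sqrt_nonneg _))]
  congr 1
  nlinarith [Real.sq_sqrt e0, Real.sq_sqrt e1]

lemma c2_s2_of_one_lt (l : ℝ) (h1 : 1 < l) :
    cCheck l ^ 2 = 1 - 1 / l ^ 2 ∧ sCheck l ^ 2 = 1 / l ^ 2 := by
  have hl : 0 < l := lt_trans one_pos h1
  have hle : 1 / l ^ 2 ≤ 1 := by
    rw [div_le_one (by positivity)]
    nlinarith
  have hc : cCheck l ^ 2 = 1 - 1 / l ^ 2 := by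
    rw [cCheck, if_pos h1, Real.sq_sqrt (by linarith)]
  refine ⟨hc, ?_⟩
  have he : (1:ℝ) - (1 - 1 / l ^ 2) = 1 / l ^ 2 := by ring
  rw [sCheck, hc, he, Real.sq_sqrt (by positivity)]

lemma c2_s2_of_le_one (l : ℝ) (h1 : ¬ 1 < l) :
    cCheck l = 0 ∧ sCheck l ^ 2 = 1 := by
  have hc : cCheck l = 0 := by rw [cCheck, if_neg h1]
  refine ⟨hc, ?_⟩
  rw [sCheck, hc]
  norm_num

lemma lossCheckN_formula (l θ : ℝ) (hl : 0 < l) :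
    lossCheckN l θ = Real.sqrt (l ^ 2 - 2 * l * θ * cCheck l ^ 2 + θ ^ 2
      + 2 * l * sCheck l ^ 2 * |θ|) := by
  set c := cCheck l with hc
  set s := sCheck l with hs
  have hs2 : s ^ 2 = 1 - c ^ 2 := by
    by_cases h1 : 1 < l
    · obtain ⟨h2, h3⟩ := c2_s2_of_one_lt l h1
      rw [← hc] at h2; rw [← hs] at h3; rw [h2, h3]; ring
    · obtain ⟨h2, h3⟩ := c2_s2_of_le_one l h1
      rw [← hc] at h2; rw [← hs] at h3; rw [h2, h3]; norm_num
  have hc2le : c ^ 2 ≤ 1 := by nlinarith [sq_nonneg s]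
  rw [lossCheckN, nucNorm_eq_sqrt]
  congr 1
  have hsym : (pivotM l θ c s).conjTranspose = pivotM l θ c s := by
    ext i j
    fin_cases i <;> fin_cases j <;> simp [pivotM, Matrix.conjTranspose_apply]
  have hdet : (pivotM l θ c s).det = -(l * (1 - c ^ 2)) * θ := by
    simp [pivotM, Matrix.det_fin_two]
    linear_combination (-(l * θ)) * hs2
  have habs : |(pivotM l θ c s).det| = l * (1 - c ^ 2) * |θ| := by
    rw [hdet, abs_mul, abs_neg, abs_of_nonneg (by nlinarith : (0:ℝ) ≤ l * (1 - c ^ 2))]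
  have htr : ((pivotM l θ c s).conjTranspose * pivotM l θ c s).trace
      = l ^ 2 - 2 * l * θ * c ^ 2 + θ ^ 2 := by
    rw [hsym]
    simp [pivotM, Matrix.trace_fin_two, Matrix.mul_apply, Fin.sum_univ_two]
    linear_combination (θ ^ 2 * s ^ 2 + θ ^ 2 * (1 - c ^ 2) + 2 * θ ^ 2 * c ^ 2) * hs2
  rw [htr, habs, hs2]
  ring

theorem optimal_nuclear_shrinker_check (l : ℝ) (hl : 0 < l) :
    (∀ θ : ℝ, lossCheckN l (if Real.sqrt 2 < l then l - 2 / l else 0) ≤ lossCheckN l θ) ∧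
    lossCheckN l (if Real.sqrt 2 < l then l - 2 / l else 0)
      = (if Real.sqrt 2 < l then 2 * Real.sqrt (1 - 1 / l ^ 2) else l) := by
  have hs2 : Real.sqrt 2 ^ 2 = 2 := Real.sq_sqrt (by norm_num)
  have hs2n : (0:ℝ) ≤ Real.sqrt 2 := Real.sqrt_nonneg 2
  by_cases h : Real.sqrt 2 < l
  · -- l > √2 : θ* = l - 2/l
    have hl2 : 2 < l ^ 2 := by nlinarith
    have h1 : 1 < l := by nlinarith
    obtain ⟨hcv, hsv⟩ := c2_s2_of_one_lt l h1
    have hθs : 0 ≤ l - 2 / l := by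
      rw [sub_nonneg, div_le_iff₀ hl]; nlinarith
    have hval : lossCheckN l (l - 2 / l) = 2 * Real.sqrt (1 - 1 / l ^ 2) := by
      rw [lossCheckN_formula l _ hl, hcv, hsv, abs_of_nonneg hθs]
      have : l ^ 2 - 2 * l * (l - 2 / l) * (1 - 1 / l ^ 2) + (l - 2 / l) ^ 2
          + 2 * l * (1 / l ^ 2) * (l - 2 / l) = 4 * (1 - 1 / l ^ 2) := by
        field_simp; ring
      rw [this, show (4:ℝ) * (1 - 1/l^2) = 2^2 * (1 - 1/l^2) by ring,
        Real.sqrt_mul (by positivity), Real.sqrt_sq (by norm_num : (0:ℝ) ≤ 2)]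
    constructor
    · intro θ
      rw [if_pos h, lossCheckN_formula l _ hl, lossCheckN_formula l θ hl,
        hcv, hsv, abs_of_nonneg hθs]
      apply Real.sqrt_le_sqrt
      have hθ : θ ≤ |θ| := le_abs_self θ
      have hln : l ≠ 0 := hl.ne'
      have hA : l ^ 2 - 2 * l * (l - 2 / l) * (1 - 1 / l ^ 2) + (l - 2 / l) ^ 2
          + 2 * l * (1 / l ^ 2) * (l - 2 / l) = 4 * (1 - 1 / l ^ 2) := by
        field_simp; ring
      have hB : l ^ 2 - 2 * l * θ * (1 - 1 / l ^ 2) + θ ^ 2 + 2 * l * (1 / l ^ 2) * |θ|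
          = (θ - (l - 2 / l)) ^ 2 + 2 / l * (|θ| - θ) + 4 * (1 - 1 / l ^ 2) := by
        field_simp; ring
      rw [hA, hB]
      have h1' : 0 ≤ 2 / l * (|θ| - θ) :=
        mul_nonneg (by positivity) (by linarith)
      nlinarith [sq_nonneg (θ - (l - 2 / l))]
    · rw [if_pos h, if_pos h]
      exact hval
  · -- l ≤ √2 : θ* = 0
    have hl2 : l ^ 2 ≤ 2 := by nlinarith [not_lt.mp h]
    have hval : lossCheckN l 0 = l := by
      rw [lossCheckN_formula l 0 hl]
      simp [Real.sqrt_sq hl.le]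
    constructor
    · intro θ
      rw [if_neg h, lossCheckN_formula l 0 hl, lossCheckN_formula l θ hl]
      apply Real.sqrt_le_sqrt
      simp only [abs_zero, mul_zero, zero_pow, ne_eq, OfNat.ofNat_ne_zero,
        not_false_eq_true, add_zero]
      have hθ : θ ≤ |θ| := le_abs_self θ
      have hθ' : -θ ≤ |θ| := neg_le_abs θ
      by_cases h1 : 1 < l
      · obtain ⟨hcv, hsv⟩ := c2_s2_of_one_lt l h1
        rw [hcv, hsv]
        have hln : l ≠ 0 := hl.ne'
        have hB : l ^ 2 - 2 * l * θ * (1 - 1 / l ^ 2) + θ ^ 2 + 2 * l * (1 / l ^ 2) * |θ|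
            - (l ^ 2 - 2 * l * θ * 0)
            = (l * θ ^ 2 - 2 * θ * (l ^ 2 - 1) + 2 * |θ|) / l := by
          field_simp; ring
        have hnum : 0 ≤ l * θ ^ 2 - 2 * θ * (l ^ 2 - 1) + 2 * |θ| := by
          rcases le_or_gt 0 θ with ht | ht
          · rw [abs_of_nonneg ht]
            nlinarith [mul_nonneg hl.le (sq_nonneg θ), mul_nonneg ht (sub_nonneg.mpr hl2)]
          · rw [abs_of_neg ht]
            nlinarith [mul_nonneg hl.le (sq_nonneg θ), mul_pos (neg_pos.mpr ht) (mul_pos hl hl)]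
        have := div_nonneg hnum hl.le
        linarith [hB ▸ this]
      · obtain ⟨hcv, hsv⟩ := c2_s2_of_le_one l h1
        rw [hcv, hsv]
        nlinarith [sq_nonneg θ, mul_nonneg hl.le (abs_nonneg θ)]
    · rw [if_neg h, if_neg h]
      exact hval
end
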